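/- arXiv:1601.04838 — 2 statements merged into one kernel-verified Lean document; each statement's English description precedes it below -/
import Mathlib

section
/- Let b, c, p₀, q₀, A₁, A₃, A₄ ∈ ℚ with b ≠ 0, p₀·q₀ ≠ 0, and set m = p₀² + b·q₀² + c. Assume m ≠ 0, m ≠ c, A₁⁴ − 256·A₄·(m − c)²m⁴ ≠ 0, define A₂ = (A₁⁶ + 64(m − c)²m²A₁³A₃ + 256(2c − 3m)(m − c)²m³A₁²A₄ − 512(m − c)³m⁵A₃²)/(8m(m − c)(A₁⁴ − 256A₄(m − c)²m⁴)), and assume the polynomial f₂(X) = A₄X⁴ + A₃X³ + A₂X² + A₁X + m² has nonzero discriminant. Set C₄ = A₁⁴ − 256(m − c)²m⁴A₄, C₂ = 2b(A₁⁶ − 32(m − c)²m²(A₃A₁³ + 8c·m·A₄A₁² − 8(m − c)m³A₃²)), and C₀ = b²(A₁⁸ − 64(m − c)²m²A₁⁵A₃ + 512(m − c)²m³(m − 2c)A₁⁴A₄ + 1024(m − c)³m⁵A₁²A₃² − 16384(m − c)⁴m⁶A₄(A₁A₃ − 4A₄m²)). If the set of rational points (U, V) ∈ ℚ² satisfying V²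 = 2b·m·(m − c)·(256A₄(m − c)²m⁴ − A₁⁴)·(C₄U⁴ + C₂U² + C₀) is infinite, then the set of X ∈ ℚ for which there exist p, q ∈ ℚ with (p² + b·q² + c)² = f₂(X) is infinite. -/
open Polynomial

/-!
A curve point `(U, V)` yields a line `(p, q) = (p₀ + t x, q₀ + s x)` through the base point with
`t² + b s² = Q := (U² + b A₁²) / (16 b m² (m - c))` and `4 m (p₀ t + b q₀ s) = A₁`. Along such a
line `(p² + b q² + c)²` agrees with `f₂` to first order at `x = 0`, and the remaining condition
on `x` is a quadratic equation whose discriminant, by the choice of `A₂`, `C₄`, `C₂`, `C₀`, is the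
square of `U V / (8 b² m (m - c)² C₄)`. A given `x` arises from only finitely many `(U, V)`:
it determines `Q` up to two values, `Q` determines `U` up to sign, and `U` determines `V` up to
sign.
-/

section Finiteness

variable {K : Type*} [Field K]

lemma finite_setOf_sq_eq (r : K) : {v : K | v ^ 2 = r}.Finite := by
  convert (nthRootsFinset 2 r).finite_toSet using 1
  ext v
  simp

lemma finite_setOf_quadratic_eq_zero {a b c : K} (h : a ≠ 0 ∨ b ≠ 0) :
    {x : K | a * x ^ 2 + b * x + c = 0}.Finite := by
  have hp : C a * X ^ 2 + C b * X + C c ≠ 0 := by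
    intro hp
    rcases h with h | h
    · exact h (by simpa [coeff_C] using congrArg (coeff · 2) hp)
    · exact h (by simpa [coeff_C] using congrArg (coeff · 1) hp)
  simpa using finite_setOfPred_isRoot hp

lemma Set.Finite.setOf_fst_mem_sq_snd_eq {s : Set K} (hs : s.Finite) (R : K → K) :
    {P : K × K | P.1 ∈ s ∧ P.2 ^ 2 = R P.1}.Finite :=
  (hs.biUnion fun u _ => (Set.finite_singleton u).prod (finite_setOf_sq_eq (R u))).subset
    fun _ ⟨h1, h2⟩ => Set.mem_biUnion h1 ⟨rfl, h2⟩

lemma Set.Finite.setOf_sq_add_div_mem {T : Set K} (hT : T.Finite) (k : K) {D : K} (hD : D ≠ 0) :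
    {u : K | (u ^ 2 + k) / D ∈ T}.Finite :=
  (hT.biUnion fun q _ => finite_setOf_sq_eq (q * D - k)).subset fun u hu =>
    Set.mem_biUnion hu (by simp only [Set.mem_ofPred_eq]; field_simp; ring)

end Finiteness

/-- Characterized by `4m² (A₄x⁴ + A₃x³ + A₂x² + A₁x + m²) = (2m² + A₁x + 2mQx²)² + x² · r`,
where `r = residualQuadratic m A₁ A₂ A₃ A₄ Q x`. -/
def residualQuadratic {K : Type*} [CommRing K] (m A₁ A₂ A₃ A₄ Q x : K) : K :=
  4 * m ^ 2 * (A₄ - Q ^ 2) * (x * x) + (4 * m ^ 2 * A₃ - 4 * m * A₁ * Q) * x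
    + (4 * m ^ 2 * A₂ - A₁ ^ 2 - 8 * m ^ 3 * Q)

section Construction

variable {K : Type*} [Field K] [CharZero K]

lemma sq_norm_add_mul_eq_quartic {b c m p₀ q₀ t s Q A₁ A₂ A₃ A₄ x : K} (hm0 : m ≠ 0)
    (hm : m = p₀ ^ 2 + b * q₀ ^ 2 + c) (hQ : t ^ 2 + b * s ^ 2 = Q)
    (hA₁ : 4 * m * (p₀ * t + b * q₀ * s) = A₁) (hx : residualQuadratic m A₁ A₂ A₃ A₄ Q x = 0) :
    ((p₀ + t * x) ^ 2 + b * (q₀ + s * x) ^ 2 + c) ^ 2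
      = A₄ * x ^ 4 + A₃ * x ^ 3 + A₂ * x ^ 2 + A₁ * x + m ^ 2 := by
  have hline : 2 * m * ((p₀ + t * x) ^ 2 + b * (q₀ + s * x) ^ 2 + c)
      = 2 * m ^ 2 + A₁ * x + 2 * m * Q * x ^ 2 := by
    linear_combination (2 * m * x ^ 2) * hQ + x * hA₁ - 2 * m * hm
  refine mul_left_cancel₀ (show (4 * m ^ 2 : K) ≠ 0 by simp [hm0]) ?_
  unfold residualQuadratic at hx
  linear_combination (2 * m * ((p₀ + t * x) ^ 2 + b * (q₀ + s * x) ^ 2 + c)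
    + 2 * m ^ 2 + A₁ * x + 2 * m * Q * x ^ 2) * hline - x ^ 2 * hx

lemma finite_setOf_residualQuadratic_eq_zero {m : K} (hm0 : m ≠ 0) (A₁ A₂ A₃ A₄ x : K) :
    {Q : K | residualQuadratic m A₁ A₂ A₃ A₄ Q x = 0}.Finite := by
  have hcoeff : -4 * m ^ 2 * x ^ 2 ≠ 0 ∨ -4 * m * A₁ * x - 8 * m ^ 3 ≠ 0 := by
    by_cases hx : x = 0
    · right
      simpa [hx] using hm0
    · left
      simp [hm0, hx]
  refine (finite_setOf_quadratic_eq_zero hcoeff (c := 4 * m ^ 2 * (A₄ * x ^ 2 + A₃ * x + A₂)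
    - A₁ ^ 2)).subset fun Q hQ => ?_
  simp only [Set.mem_ofPred_eq, residualQuadratic] at hQ ⊢
  linear_combination hQ

lemma exists_norm_eq_and_pairing_eq {b p₀ q₀ m N : K} (U A₁ : K) (hb : b ≠ 0) (hm0 : m ≠ 0)
    (hN0 : N ≠ 0) (hN : p₀ ^ 2 + b * q₀ ^ 2 = N) :
    ∃ t s : K, t ^ 2 + b * s ^ 2 = (U ^ 2 + b * A₁ ^ 2) / (16 * b * m ^ 2 * N) ∧
      4 * m * (p₀ * t + b * q₀ * s) = A₁ := by
  refine ⟨(A₁ * p₀ - U * q₀) / (4 * m * N), (b * A₁ * q₀ + U * p₀) / (4 * b * m * N), ?_, ?_⟩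
  · field_simp
    linear_combination 16 * (U ^ 2 + b * A₁ ^ 2) * hN
  · field_simp
    linear_combination A₁ * hN

lemma discrim_residualQuadratic_eq_sq {b c m A₁ A₂ A₃ A₄ C₄ C₂ C₀ Q U V : K}
    (hb : b ≠ 0) (hm0 : m ≠ 0) (hmc : m ≠ c)
    (hA : A₁ ^ 4 - 256 * A₄ * (m - c) ^ 2 * m ^ 4 ≠ 0)
    (hA₂ : A₂ = (A₁ ^ 6 + 64 * (m - c) ^ 2 * m ^ 2 * A₁ ^ 3 * A₃
        + 256 * (2 * c - 3 * m) * (m - c) ^ 2 * m ^ 3 * A₁ ^ 2 * A₄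
        - 512 * (m - c) ^ 3 * m ^ 5 * A₃ ^ 2)
      / (8 * m * (m - c) * (A₁ ^ 4 - 256 * A₄ * (m - c) ^ 2 * m ^ 4)))
    (hC₄ : C₄ = A₁ ^ 4 - 256 * (m - c) ^ 2 * m ^ 4 * A₄)
    (hC₂ : C₂ = 2 * b * (A₁ ^ 6 - 32 * (m - c) ^ 2 * m ^ 2 *
      (A₃ * A₁ ^ 3 + 8 * c * m * A₄ * A₁ ^ 2 - 8 * (m - c) * m ^ 3 * A₃ ^ 2)))
    (hC₀ : C₀ = b ^ 2 * (A₁ ^ 8 - 64 * (m - c) ^ 2 * m ^ 2 * A₁ ^ 5 * A₃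
      + 512 * (m - c) ^ 2 * m ^ 3 * (m - 2 * c) * A₁ ^ 4 * A₄
      + 1024 * (m - c) ^ 3 * m ^ 5 * A₁ ^ 2 * A₃ ^ 2
      - 16384 * (m - c) ^ 4 * m ^ 6 * A₄ * (A₁ * A₃ - 4 * A₄ * m ^ 2)))
    (hQ : Q = (U ^ 2 + b * A₁ ^ 2) / (16 * b * m ^ 2 * (m - c)))
    (hV : V ^ 2 = 2 * b * m * (m - c) * (256 * A₄ * (m - c) ^ 2 * m ^ 4 - A₁ ^ 4)
      * (C₄ * U ^ 4 + C₂ * U ^ 2 + C₀)) :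
    discrim (4 * m ^ 2 * (A₄ - Q ^ 2)) (4 * m ^ 2 * A₃ - 4 * m * A₁ * Q)
        (4 * m ^ 2 * A₂ - A₁ ^ 2 - 8 * m ^ 3 * Q)
      = U * V / (8 * b ^ 2 * m * (m - c) ^ 2 * C₄)
        * (U * V / (8 * b ^ 2 * m * (m - c) ^ 2 * C₄)) := by
  have hd : m - c ≠ 0 := sub_ne_zero.mpr hmc
  have hC₄' : A₁ ^ 4 - 256 * A₄ * (m - c) ^ 2 * m ^ 4 = C₄ := by rw [hC₄]; ring
  rw [hC₄'] at hA hA₂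
  subst hA₂ hC₂ hC₀ hQ
  rw [discrim, div_mul_div_comm, mul_mul_mul_comm, ← sq V, hV]
  field_simp
  rw [hC₄]
  ring

end Construction

theorem stmt_13_general (b c p₀ q₀ A₁ A₃ A₄ m A₂ C₄ C₂ C₀ : ℚ)
    (hb : b ≠ 0)
    (hm : m = p₀ ^ 2 + b * q₀ ^ 2 + c) (hm0 : m ≠ 0) (hmc : m ≠ c)
    (hA : A₁ ^ 4 - 256 * A₄ * (m - c) ^ 2 * m ^ 4 ≠ 0)
    (hA₂ : A₂ = (A₁ ^ 6 + 64 * (m - c) ^ 2 * m ^ 2 * A₁ ^ 3 * A₃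
        + 256 * (2 * c - 3 * m) * (m - c) ^ 2 * m ^ 3 * A₁ ^ 2 * A₄
        - 512 * (m - c) ^ 3 * m ^ 5 * A₃ ^ 2)
      / (8 * m * (m - c) * (A₁ ^ 4 - 256 * A₄ * (m - c) ^ 2 * m ^ 4)))
    (hC₄ : C₄ = A₁ ^ 4 - 256 * (m - c) ^ 2 * m ^ 4 * A₄)
    (hC₂ : C₂ = 2 * b * (A₁ ^ 6 - 32 * (m - c) ^ 2 * m ^ 2 *
      (A₃ * A₁ ^ 3 + 8 * c * m * A₄ * A₁ ^ 2 - 8 * (m - c) * m ^ 3 * A₃ ^ 2)))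
    (hC₀ : C₀ = b ^ 2 * (A₁ ^ 8 - 64 * (m - c) ^ 2 * m ^ 2 * A₁ ^ 5 * A₃
      + 512 * (m - c) ^ 2 * m ^ 3 * (m - 2 * c) * A₁ ^ 4 * A₄
      + 1024 * (m - c) ^ 3 * m ^ 5 * A₁ ^ 2 * A₃ ^ 2
      - 16384 * (m - c) ^ 4 * m ^ 6 * A₄ * (A₁ * A₃ - 4 * A₄ * m ^ 2)))
    (hinf : {P : ℚ × ℚ | P.2 ^ 2 = 2 * b * m * (m - c)
      * (256 * A₄ * (m - c) ^ 2 * m ^ 4 - A₁ ^ 4)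
      * (C₄ * P.1 ^ 4 + C₂ * P.1 ^ 2 + C₀)}.Infinite) :
    {x : ℚ | ∃ p q : ℚ, (p ^ 2 + b * q ^ 2 + c) ^ 2 =
      A₄ * x ^ 4 + A₃ * x ^ 3 + A₂ * x ^ 2 + A₁ * x + m ^ 2}.Infinite := by
  set R : ℚ → ℚ := fun u => 2 * b * m * (m - c)
      * (256 * A₄ * (m - c) ^ 2 * m ^ 4 - A₁ ^ 4) * (C₄ * u ^ 4 + C₂ * u ^ 2 + C₀)
  set S := {P : ℚ × ℚ | P.2 ^ 2 = R P.1}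
  have hN : p₀ ^ 2 + b * q₀ ^ 2 = m - c := by rw [hm]; ring
  have hd : m - c ≠ 0 := sub_ne_zero.mpr hmc
  have hD : 16 * b * m ^ 2 * (m - c) ≠ 0 := by simp [hb, hm0, hd]
  set Q : ℚ → ℚ := fun u => (u ^ 2 + b * A₁ ^ 2) / (16 * b * m ^ 2 * (m - c))
  set F : ℚ × ℚ → ℚ := fun P => (-(4 * m ^ 2 * A₃ - 4 * m * A₁ * Q P.1)
    + P.1 * P.2 / (8 * b ^ 2 * m * (m - c) ^ 2 * C₄)) / (2 * (4 * m ^ 2 * (A₄ - Q P.1 ^ 2)))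
  have hfinite : ∀ T : Set ℚ, T.Finite → {P ∈ S | Q P.1 ∈ T}.Finite := fun T hT =>
    ((hT.setOf_sq_add_div_mem _ hD).setOf_fst_mem_sq_snd_eq R).subset fun _ hP => ⟨hP.2, hP.1⟩
  have hroot : ∀ P ∈ S, 4 * m ^ 2 * (A₄ - Q P.1 ^ 2) ≠ 0 →
      residualQuadratic m A₁ A₂ A₃ A₄ (Q P.1) (F P) = 0 := fun P hP ha =>
    (quadratic_eq_zero_iff ha (discrim_residualQuadratic_eq_sq hb hm0 hmc hA hA₂ hC₄ hC₂ hC₀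
      rfl hP) _).2 (Or.inl rfl)
  set G := {P ∈ S | 4 * m ^ 2 * (A₄ - Q P.1 ^ 2) ≠ 0}
  have hG : G.Infinite := by
    refine ((show S.Infinite from hinf).sdiff (hfinite _ (finite_setOf_sq_eq A₄))).mono ?_
    rintro P ⟨hP, hPB⟩
    exact ⟨hP, mul_ne_zero (by simp [hm0]) (sub_ne_zero.2 fun h => hPB ⟨hP, h.symm⟩)⟩
  intro hfin
  refine hG (Set.Finite.of_finite_fibers F (hfin.subset ?_) fun x _ => ?_)
  · rintro _ ⟨P, ⟨hP, ha⟩, rfl⟩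
    obtain ⟨t, s, ht, hs⟩ := exists_norm_eq_and_pairing_eq P.1 A₁ hb hm0 hd hN
    exact ⟨_, _, sq_norm_add_mul_eq_quartic hm0 hm ht hs (hroot P hP ha)⟩
  · refine (hfinite _ (finite_setOf_residualQuadratic_eq_zero hm0 A₁ A₂ A₃ A₄ x)).subset ?_
    rintro P ⟨⟨hP, ha⟩, rfl⟩
    exact ⟨hP, hroot P hP ha⟩

theorem stmt_13 (b c p₀ q₀ A₁ A₃ A₄ m A₂ C₄ C₂ C₀ : ℚ)
    (hb : b ≠ 0) (hpq : p₀ * q₀ ≠ 0)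
    (hm : m = p₀ ^ 2 + b * q₀ ^ 2 + c) (hm0 : m ≠ 0) (hmc : m ≠ c)
    (hA : A₁ ^ 4 - 256 * A₄ * (m - c) ^ 2 * m ^ 4 ≠ 0)
    (hA₂ : A₂ = (A₁ ^ 6 + 64 * (m - c) ^ 2 * m ^ 2 * A₁ ^ 3 * A₃
        + 256 * (2 * c - 3 * m) * (m - c) ^ 2 * m ^ 3 * A₁ ^ 2 * A₄
        - 512 * (m - c) ^ 3 * m ^ 5 * A₃ ^ 2)
      / (8 * m * (m - c) * (A₁ ^ 4 - 256 * A₄ * (m - c) ^ 2 * m ^ 4)))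
    (hdisc : (C A₄ * X ^ 4 + C A₃ * X ^ 3 + C A₂ * X ^ 2 + C A₁ * X
      + C (m ^ 2) : ℚ[X]).Separable)
    (hC₄ : C₄ = A₁ ^ 4 - 256 * (m - c) ^ 2 * m ^ 4 * A₄)
    (hC₂ : C₂ = 2 * b * (A₁ ^ 6 - 32 * (m - c) ^ 2 * m ^ 2 *
      (A₃ * A₁ ^ 3 + 8 * c * m * A₄ * A₁ ^ 2 - 8 * (m - c) * m ^ 3 * A₃ ^ 2)))
    (hC₀ : C₀ = b ^ 2 * (A₁ ^ 8 - 64 * (m - c) ^ 2 * m ^ 2 * A₁ ^ 5 * A₃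
      + 512 * (m - c) ^ 2 * m ^ 3 * (m - 2 * c) * A₁ ^ 4 * A₄
      + 1024 * (m - c) ^ 3 * m ^ 5 * A₁ ^ 2 * A₃ ^ 2
      - 16384 * (m - c) ^ 4 * m ^ 6 * A₄ * (A₁ * A₃ - 4 * A₄ * m ^ 2)))
    (hinf : {P : ℚ × ℚ | P.2 ^ 2 = 2 * b * m * (m - c)
      * (256 * A₄ * (m - c) ^ 2 * m ^ 4 - A₁ ^ 4)
      * (C₄ * P.1 ^ 4 + C₂ * P.1 ^ 2 + C₀)}.Infinite) :
    {x : ℚ | ∃ p q : ℚ, (p ^ 2 + b * q ^ 2 + c) ^ 2 =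
      A₄ * x ^ 4 + A₃ * x ^ 3 + A₂ * x ^ 2 + A₁ * x + m ^ 2}.Infinite :=
  stmt_13_general b c p₀ q₀ A₁ A₃ A₄ m A₂ C₄ C₂ C₀ hb hm hm0 hmc hA hA₂ hC₄ hC₂ hC₀ hinf
end

section
/- Let a, b, A, B ∈ ℚ with a ≠ 0, B ≠ 0, and A² − 4B ≠ 0. If the set of rational points (x, y) ∈ ℚ² on the curve E₁ : y² = x³ + A·x² + B·x is infinite, then the set of X ∈ ℚ for which there exist Y, p, q ∈ ℚ with Y² = ((X − b)/a)³ − 2A·((X − b)/a)² + (A² − 4B)·((X − b)/a) and X = a·p² + b·q² is infinite. -/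
/-! The 2-isogeny `(x, y) ↦ ((y/x)², y(B − x²)/x²)` sends every point of `E₁` other than
`(0, 0)` to a point of `Y² = X³ − 2AX² + (A² − 4B)X` whose `X`-coordinate is the square
`(y/x)²`; hence `a (y/x)² + b` lies in the target set. Only finitely many points of `E₁` share
a slope `y/x = m` (their `x` solves `x² + (A − m²)x + B = 0`), and only finitely many slopes
share the value of `a m² + b`, so infinitely many points give infinitely many values. -/

theorem finite_setOf_sq_add_mul_add_eq_zero {R : Type*} [CommRing R] [IsDomain R] (c d : R) :
    {x : R | x ^ 2 + c * x + d = 0}.Finite := by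
  rcases Set.eq_empty_or_nonempty {x : R | x ^ 2 + c * x + d = 0} with h | ⟨x₀, hx₀⟩
  · simp [h]
  refine ((Set.finite_singleton (-c - x₀)).insert x₀).subset fun x hx => ?_
  have hfactor : (x - x₀) * (x - (-c - x₀)) = 0 := by
    rw [Set.mem_ofPred_eq] at hx hx₀
    linear_combination hx - hx₀
  rcases mul_eq_zero.1 hfactor with h | h
  · exact Or.inl (sub_eq_zero.1 h)
  · exact Or.inr (sub_eq_zero.1 h)

theorem Set.Infinite.image_of_finite_fibers {α β : Type*} {s : Set α} (hs : s.Infinite)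
    (f : α → β) (hfibers : ∀ c, (s ∩ f ⁻¹' {c}).Finite) : (f '' s).Infinite :=
  fun himage => hs (Set.Finite.of_finite_fibers f himage fun c _ => hfibers c)

section Curve

variable {K : Type*} [Field K]

def curve (A B : K) : Set (K × K) := {P | P.2 ^ 2 = P.1 ^ 3 + A * P.1 ^ 2 + B * P.1}

def originSlope (P : K × K) : K := P.2 / P.1

theorem fst_ne_zero_of_mem_curve {A B : K} {P : K × K} (hP : P ∈ curve A B) (h0 : P ≠ 0) :
    P.1 ≠ 0 := by
  obtain ⟨x, y⟩ := P
  rintro rfl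
  have hy : y ^ 2 = 0 := by simpa [curve] using hP
  exact h0 (by simp [pow_eq_zero_iff two_ne_zero |>.1 hy])

theorem finite_curve_diff_zero_inter_originSlope_fiber (A B m : K) :
    (curve A B \ {0} ∩ originSlope ⁻¹' {m}).Finite := by
  refine ((finite_setOf_sq_add_mul_add_eq_zero (A - m ^ 2) B).image fun x => (x, m * x)).subset ?_
  rintro ⟨x, y⟩ ⟨⟨hP, h0⟩, hm⟩
  have hx : x ≠ 0 := fst_ne_zero_of_mem_curve hP h0
  have hy : y = m * x := by
    rw [← hm, originSlope, div_mul_cancel₀ y hx]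
  subst hy
  refine ⟨x, ?_, rfl⟩
  have hcubic : x * (x ^ 2 + (A - m ^ 2) * x + B) = 0 := by
    rw [curve, Set.mem_ofPred_eq] at hP
    linear_combination -hP
  exact (mul_eq_zero.1 hcubic).resolve_left hx

theorem infinite_image_originSlope {A B : K} (h : (curve A B).Infinite) :
    (originSlope '' (curve A B \ {0})).Infinite :=
  (h.sdiff (Set.finite_singleton 0)).image_of_finite_fibers originSlope
    (finite_curve_diff_zero_inter_originSlope_fiber A B)

theorem twoIsogeny_mem_curve {A B x y : K} (hx : x ≠ 0) (hP : (x, y) ∈ curve A B) :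
    ((y / x) ^ 2, y * (B - x ^ 2) / x ^ 2) ∈ curve (-2 * A) (A ^ 2 - 4 * B) := by
  have hy : y ^ 2 = x ^ 3 + A * x ^ 2 + B * x := hP
  simp only [curve, Set.mem_ofPred_eq]
  field_simp
  linear_combination (y ^ 2 * (A * x ^ 2 - y ^ 2 - x ^ 3 - B * x)) * hy

theorem finite_setOf_mul_sq_add_eq {a : K} (ha : a ≠ 0) (b c : K) :
    {s : K | a * s ^ 2 + b = c}.Finite :=
  (finite_setOf_sq_add_mul_add_eq_zero 0 ((b - c) / a)).subset fun s (hs : a * s ^ 2 + b = c) => by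
    simp only [Set.mem_ofPred_eq]
    field_simp
    linear_combination hs

end Curve

theorem stmt_15_general (a b A B : ℚ) (ha : a ≠ 0)
    (hinf : {P : ℚ × ℚ | P.2 ^ 2 = P.1 ^ 3 + A * P.1 ^ 2 + B * P.1}.Infinite) :
    {x : ℚ | ∃ Y p q : ℚ, Y ^ 2 = ((x - b) / a) ^ 3 - 2 * A * ((x - b) / a) ^ 2
      + (A ^ 2 - 4 * B) * ((x - b) / a) ∧ x = a * p ^ 2 + b * q ^ 2}.Infinite := by
  have hvalues : ((fun s => a * s ^ 2 + b) '' (originSlope '' (curve A B \ {0}))).Infinite :=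
    (infinite_image_originSlope hinf).image_of_finite_fibers _
      fun c => (finite_setOf_mul_sq_add_eq ha b c).subset Set.inter_subset_right
  refine hvalues.mono ?_
  rintro _ ⟨_, ⟨⟨x, y⟩, ⟨hP, h0⟩, rfl⟩, rfl⟩
  have hX : (a * originSlope (x, y) ^ 2 + b - b) / a = (y / x) ^ 2 := by
    rw [add_sub_cancel_right, mul_div_cancel_left₀ _ ha, originSlope]
  have hE₂ := twoIsogeny_mem_curve (fst_ne_zero_of_mem_curve hP h0) hP
  refine ⟨y * (B - x ^ 2) / x ^ 2, originSlope (x, y), 1, ?_, by ring⟩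
  rw [hX]
  simp only [curve, Set.mem_ofPred_eq] at hE₂
  linear_combination hE₂

theorem stmt_15 (a b A B : ℚ) (ha : a ≠ 0) (hB : B ≠ 0) (hAB : A ^ 2 - 4 * B ≠ 0)
    (hinf : {P : ℚ × ℚ | P.2 ^ 2 = P.1 ^ 3 + A * P.1 ^ 2 + B * P.1}.Infinite) :
    {x : ℚ | ∃ Y p q : ℚ, Y ^ 2 = ((x - b) / a) ^ 3 - 2 * A * ((x - b) / a) ^ 2
      + (A ^ 2 - 4 * B) * ((x - b) / a) ∧ x = a * p ^ 2 + b * q ^ 2}.Infinite :=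
  stmt_15_general a b A B ha hinf
end
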